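/- arXiv:1612.00279 — 3 statements merged into one kernel-verified Lean document; each statement's English description precedes it below -/
import Mathlib

section
/- For every invertible linear map T : ℝ² → ℝ², there exist two orthogonal unit vectors u, v in ℝ² such that T u and T v are orthogonal. -/
open RealInnerProductSpace

/-- Tissot's first principle (existence): for every invertible linear map of the
Euclidean plane there is an orthogonal pair of unit vectors whose images are orthogonal. -/
theorem tissot_principal_tangents_exist
    (T : EuclideanSpace ℝ (Fin 2) ≃ₗ[ℝ] EuclideanSpace ℝ (Fin 2)) :
    ∃ u v : EuclideanSpace ℝ (Fin 2),
      ‖u‖ = 1 ∧ ‖v‖ = 1 ∧ ⟪u, v⟫ = 0 ∧ ⟪T u, T v⟫ = 0 := by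
  set S : EuclideanSpace ℝ (Fin 2) →ₗ[ℝ] EuclideanSpace ℝ (Fin 2) :=
    LinearMap.adjoint T.toLinearMap ∘ₗ T.toLinearMap with hSdef
  have hS : S.IsSymmetric := by
    intro x y
    simp [hSdef, LinearMap.adjoint_inner_left, LinearMap.adjoint_inner_right,
      real_inner_comm]
  have hn : Module.finrank ℝ (EuclideanSpace ℝ (Fin 2)) = 2 :=
    finrank_euclideanSpace_fin
  set b := hS.eigenvectorBasis hn with hb
  refine ⟨b 0, b 1, b.orthonormal.1 0, b.orthonormal.1 1, ?_, ?_⟩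
  · have := b.orthonormal.2 (i := 0) (j := 1) (by decide)
    simpa using this
  · have h1 : ⟪T (b 0), T (b 1)⟫ = ⟪b 0, S (b 1)⟫ := by
      simp [hSdef, LinearMap.adjoint_inner_right]
    rw [h1, hS.apply_eigenvectorBasis hn 1, real_inner_smul_right]
    have := b.orthonormal.2 (i := 0) (j := 1) (by decide)
    simp_all
end

section
/- Let T : ℝ² → ℝ² be an invertible linear map. If there exist two distinct pairs of orthogonal unit vectors, each of which is mapped by T to an orthogonal pair, and these pairs span genuinely different directions (they are not related by a rotation preserving the orthogonal frame), then T is a conformal map (a nonzero scalar multiple of an orthogonal transformation). -/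
set_option maxHeartbeats 1000000

open RealInnerProductSpace

lemma tissot_inner_expand {E : Type*} [NormedAddCommGroup E] [InnerProductSpace ℝ E]
    (x y z w : E) (p q r s : ℝ) :
    ⟪p • x + q • y, r • z + s • w⟫ =
      p * r * ⟪x, z⟫ + p * s * ⟪x, w⟫ + q * r * ⟪y, z⟫ + q * s * ⟪y, w⟫ := by
  simp only [inner_add_left, inner_add_right, real_inner_smul_left, real_inner_smul_right]
  ring

/-- Tissot's first principle (uniqueness): if an invertible linear map of the plane sends
two genuinely distinct orthonormal pairs to orthogonal pairs, it is conformal, i.e. a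
nonzero scalar multiple of an orthogonal transformation. -/
theorem tissot_principal_tangents_unique
    (T : EuclideanSpace ℝ (Fin 2) ≃ₗ[ℝ] EuclideanSpace ℝ (Fin 2))
    (u v u' v' : EuclideanSpace ℝ (Fin 2))
    (hu : ‖u‖ = 1) (hv : ‖v‖ = 1) (huv : ⟪u, v⟫ = 0)
    (hu' : ‖u'‖ = 1) (hv' : ‖v'‖ = 1) (huv' : ⟪u', v'⟫ = 0)
    (hTuv : ⟪T u, T v⟫ = 0) (hTuv' : ⟪T u', T v'⟫ = 0)
    (hdistinct : u' ≠ u ∧ u' ≠ -u ∧ u' ≠ v ∧ u' ≠ -v) :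
    ∃ (c : ℝ) (O : EuclideanSpace ℝ (Fin 2) ≃ₗᵢ[ℝ] EuclideanSpace ℝ (Fin 2)),
      c ≠ 0 ∧ ∀ x, T x = c • O x := by
  have hvu : ⟪v, u⟫ = 0 := by rw [real_inner_comm]; exact huv
  have huu : ⟪u, u⟫ = 1 := by rw [real_inner_self_eq_norm_sq, hu]; norm_num
  have hvv : ⟪v, v⟫ = 1 := by rw [real_inner_self_eq_norm_sq, hv]; norm_num
  -- orthonormal basis
  have hon : Orthonormal ℝ ![u, v] := by
    rw [orthonormal_iff_ite]
    intro i j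
    fin_cases i <;> fin_cases j <;>
      simp_all
  have hsp : ⊤ ≤ Submodule.span ℝ (Set.range ![u, v]) := by
    rw [hon.linearIndependent.span_eq_top_of_card_eq_finrank]
    · simp [finrank_euclideanSpace]
  let b : OrthonormalBasis (Fin 2) ℝ (EuclideanSpace ℝ (Fin 2)) := OrthonormalBasis.mk hon hsp
  have hb0 : b 0 = u := by simp [b, OrthonormalBasis.coe_mk]
  have hb1 : b 1 = v := by simp [b, OrthonormalBasis.coe_mk]
  have hrepr : ∀ x : EuclideanSpace ℝ (Fin 2), x = ⟪u, x⟫ • u + ⟪v, x⟫ • v := by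
    intro x
    have := b.sum_repr' x
    rw [Fin.sum_univ_two, hb0, hb1] at this
    exact this.symm
  set a₁ : ℝ := ⟪u, u'⟫ with ha₁
  set a₂ : ℝ := ⟪v, u'⟫ with ha₂
  set b₁ : ℝ := ⟪u, v'⟫ with hb₁
  set b₂ : ℝ := ⟪v, v'⟫ with hb₂
  have hu'r : u' = a₁ • u + a₂ • v := hrepr u'
  have hv'r : v' = b₁ • u + b₂ • v := hrepr v'
  -- norms in coordinates
  have hnu' : a₁ ^ 2 + a₂ ^ 2 = 1 := by
    have h1 : ⟪u', u'⟫ = 1 := by rw [real_inner_self_eq_norm_sq, hu']; norm_num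
    rw [hu'r, tissot_inner_expand, huu, hvv, huv, hvu] at h1
    nlinarith [h1]
  have hnv' : b₁ ^ 2 + b₂ ^ 2 = 1 := by
    have h1 : ⟪v', v'⟫ = 1 := by rw [real_inner_self_eq_norm_sq, hv']; norm_num
    rw [hv'r, tissot_inner_expand, huu, hvv, huv, hvu] at h1
    nlinarith [h1]
  -- orthogonality of the primed pair in coordinates
  have hcross : a₁ * b₁ + a₂ * b₂ = 0 := by
    have h1 := huv'
    rw [hu'r, hv'r, tissot_inner_expand, huu, hvv, huv, hvu] at h1
    linarith [h1]
  -- a₁ ≠ 0 and a₂ ≠ 0 from distinctness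
  have ha₁0 : a₁ ≠ 0 := by
    intro h
    have h2 : a₂ ^ 2 = 1 := by nlinarith
    have : (a₂ - 1) * (a₂ + 1) = 0 := by nlinarith
    rcases mul_eq_zero.mp this with h' | h'
    · exact hdistinct.2.2.1 (by rw [hu'r, h, show a₂ = 1 by linarith]; simp)
    · exact hdistinct.2.2.2 (by rw [hu'r, h, show a₂ = -1 by linarith]; simp [neg_smul])
  have ha₂0 : a₂ ≠ 0 := by
    intro h
    have h2 : a₁ ^ 2 = 1 := by nlinarith
    have : (a₁ - 1) * (a₁ + 1) = 0 := by nlinarith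
    rcases mul_eq_zero.mp this with h' | h'
    · exact hdistinct.1 (by rw [hu'r, h, show a₁ = 1 by linarith]; simp)
    · exact hdistinct.2.1 (by rw [hu'r, h, show a₁ = -1 by linarith]; simp [neg_smul])
  have hb₂0 : b₂ ≠ 0 := by
    intro h
    have h2 : b₁ ^ 2 = 1 := by nlinarith
    have hb₁0 : b₁ ≠ 0 := by intro h'; rw [h'] at h2; norm_num at h2
    have hab : a₁ * b₁ = 0 := by
      have := hcross
      rw [h] at this
      linarith
    rcases mul_eq_zero.mp hab with h' | h'
    · exact ha₁0 h'
    · exact hb₁0 h'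
  have hTvu : ⟪T v, T u⟫ = 0 := by rw [real_inner_comm]; exact hTuv
  -- the key: equal norms of T u and T v
  have hkey : ⟪T u, T u⟫ = ⟪T v, T v⟫ := by
    have h1 := hTuv'
    rw [hu'r, hv'r, map_add, map_add, map_smul, map_smul, map_smul, map_smul,
      tissot_inner_expand, hTuv, hTvu] at h1
    -- h1 : a₁ * (b₁ * ⟪T u, T u⟫) + a₂ * (b₂ * ⟪T v, T v⟫) = 0 (up to arrangement)
    have ha₁b₁ : a₁ * b₁ = -(a₂ * b₂) := by linarith
    have hb2 : a₂ * b₂ ≠ 0 := mul_ne_zero ha₂0 hb₂0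
    have : a₂ * b₂ * (⟪T v, T v⟫ - ⟪T u, T u⟫) = 0 := by
      linear_combination h1 - ⟪T u, T u⟫ * ha₁b₁
    have := (mul_eq_zero.mp this).resolve_left hb2
    linarith
  set c : ℝ := ‖T u‖ with hc
  have hTu0 : T u ≠ 0 := by
    simp only [ne_eq, LinearEquiv.map_eq_zero_iff]
    intro h; rw [h] at hu; simp at hu
  have hc0 : c ≠ 0 := norm_ne_zero_iff.mpr hTu0
  have hTuu : ⟪T u, T u⟫ = c ^ 2 := by rw [real_inner_self_eq_norm_sq]
  have hTvv : ⟪T v, T v⟫ = c ^ 2 := by rw [← hkey, hTuu]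
  -- inner products scale by c²
  have hinner : ∀ x y, ⟪T x, T y⟫ = c ^ 2 * ⟪x, y⟫ := by
    intro x y
    have hxr := hrepr x
    have hyr := hrepr y
    have hxy : ⟪x, y⟫ = ⟪u, x⟫ * ⟪u, y⟫ + ⟪v, x⟫ * ⟪v, y⟫ := by
      conv_lhs => rw [hxr, hyr]
      rw [tissot_inner_expand, huu, hvv, huv, hvu]
      ring
    conv_lhs => rw [hxr, hyr, map_add, map_add, map_smul, map_smul, map_smul, map_smul]
    rw [tissot_inner_expand, hTuv, hTvu, hTuu, hTvv, hxy]
    ring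
  -- build the isometry
  let f : EuclideanSpace ℝ (Fin 2) ≃ₗ[ℝ] EuclideanSpace ℝ (Fin 2) :=
    T.trans (LinearEquiv.smulOfNeZero ℝ _ c⁻¹ (inv_ne_zero hc0))
  have hf : ∀ x, f x = c⁻¹ • T x := fun x => rfl
  have hfin : ∀ x y, ⟪f x, f y⟫ = ⟪x, y⟫ := by
    intro x y
    rw [hf, hf, real_inner_smul_left, real_inner_smul_right, hinner]
    field_simp
  refine ⟨c, f.isometryOfInner hfin, hc0, fun x => ?_⟩
  rw [LinearEquiv.coe_isometryOfInner, hf, smul_smul, mul_inv_cancel₀ hc0, one_smul]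
end

section
/- For an invertible linear map T : ℝ² → ℝ², the function sending a unit vector x to ‖T x‖ attains its maximum and minimum on the unit circle at two orthogonal directions, and these extremal directions are mapped by T to orthogonal directions. -/
open RealInnerProductSpace

/-- Tissot's second principle: the norm-distortion function of an invertible linear map
attains its maximum and minimum on the unit circle at two orthogonal directions, and these
extremal directions are sent to orthogonal directions. -/
theorem tissot_extremal_directions
    (T : EuclideanSpace ℝ (Fin 2) ≃ₗ[ℝ] EuclideanSpace ℝ (Fin 2)) :
    ∃ u v : EuclideanSpace ℝ (Fin 2),
      ‖u‖ = 1 ∧ ‖v‖ = 1 ∧ ⟪u, v⟫ = 0 ∧ ⟪T u, T v⟫ = 0 ∧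
      ∀ x : EuclideanSpace ℝ (Fin 2), ‖x‖ = 1 → ‖T v‖ ≤ ‖T x‖ ∧ ‖T x‖ ≤ ‖T u‖ := by
  have hn : Module.finrank ℝ (EuclideanSpace ℝ (Fin 2)) = 2 := finrank_euclideanSpace_fin
  set T' : EuclideanSpace ℝ (Fin 2) →ₗ[ℝ] EuclideanSpace ℝ (Fin 2) := T.toLinearMap with hT'
  have hS : (LinearMap.adjoint T' * T').IsSymmetric :=
    LinearMap.isSymmetric_adjoint_mul_self T'
  set S := LinearMap.adjoint T' * T' with hSdef
  have hST : ∀ x y : EuclideanSpace ℝ (Fin 2), ⟪S x, y⟫ = ⟪T x, T y⟫ := by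
    intro x y
    simp [hSdef, Module.End.mul_apply, LinearMap.adjoint_inner_left, hT']
  set b := hS.eigenvectorBasis hn with hb
  set μ := hS.eigenvalues hn with hμ
  have hSb : ∀ i, S (b i) = μ i • b i := fun i => hS.apply_eigenvectorBasis hn i
  have hbnorm : ∀ i, ‖b i‖ = 1 := fun i => b.orthonormal.1 i
  have hborth : ∀ i j, i ≠ j → ⟪b i, b j⟫ = 0 := fun i j h => b.orthonormal.2 h
  -- norm of T (b i)
  have hTb : ∀ i, ‖T (b i)‖ ^ 2 = μ i := by
    intro i
    rw [← real_inner_self_eq_norm_sq, ← hST, hSb, real_inner_smul_left,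
      real_inner_self_eq_norm_sq, hbnorm]
    ring
  have hTborth : ∀ i j, i ≠ j → ⟪T (b i), T (b j)⟫ = 0 := by
    intro i j h
    rw [← hST, hSb, real_inner_smul_left, hborth i j h, mul_zero]
  -- expansion of ‖T x‖²
  have hexp : ∀ x : EuclideanSpace ℝ (Fin 2),
      ‖T x‖ ^ 2 = μ 0 * ⟪b 0, x⟫ ^ 2 + μ 1 * ⟪b 1, x⟫ ^ 2 := by
    intro x
    have h1 : ‖T x‖ ^ 2 = ⟪S x, x⟫ := by
      rw [hST, real_inner_self_eq_norm_sq]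
    have h2 : ∑ i, ⟪S x, b i⟫ * ⟪b i, x⟫ = ⟪S x, x⟫ := b.sum_inner_mul_inner (S x) x
    have h3 : ∀ i, ⟪S x, b i⟫ = μ i * ⟪b i, x⟫ := by
      intro i
      rw [hS x (b i), hSb, real_inner_smul_right, real_inner_comm]
    rw [h1, ← h2, Fin.sum_univ_two, h3 0, h3 1]
    ring
  have hParseval : ∀ x : EuclideanSpace ℝ (Fin 2), ‖x‖ = 1 →
      ⟪b 0, x⟫ ^ 2 + ⟪b 1, x⟫ ^ 2 = 1 := by
    intro x hx
    have h2 : ∑ i, ⟪x, b i⟫ * ⟪b i, x⟫ = ⟪x, x⟫ := b.sum_inner_mul_inner x x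
    rw [Fin.sum_univ_two, real_inner_self_eq_norm_sq, hx] at h2
    have c0 : ⟪x, b 0⟫ = ⟪b 0, x⟫ := real_inner_comm _ _
    have c1 : ⟪x, b 1⟫ = ⟪b 1, x⟫ := real_inner_comm _ _
    rw [c0, c1] at h2
    nlinarith [h2]
  rcases le_total (μ 0) (μ 1) with h | h
  · refine ⟨b 1, b 0, hbnorm 1, hbnorm 0, hborth 1 0 (by decide), hTborth 1 0 (by decide), ?_⟩
    intro x hx
    have h1 := hexp x
    have hp := hParseval x hx
    have ht0 := hTb 0
    have ht1 := hTb 1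
    have hlow : μ 0 ≤ ‖T x‖ ^ 2 := by
      nlinarith [mul_nonneg (sub_nonneg.2 h) (sq_nonneg (⟪b 1, x⟫ : ℝ))]
    have hhigh : ‖T x‖ ^ 2 ≤ μ 1 := by
      nlinarith [mul_nonneg (sub_nonneg.2 h) (sq_nonneg (⟪b 0, x⟫ : ℝ))]
    constructor
    · nlinarith [norm_nonneg (T x), norm_nonneg (T (b 0))]
    · nlinarith [norm_nonneg (T x), norm_nonneg (T (b 1))]
  · refine ⟨b 0, b 1, hbnorm 0, hbnorm 1, hborth 0 1 (by decide), hTborth 0 1 (by decide), ?_⟩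
    intro x hx
    have h1 := hexp x
    have hp := hParseval x hx
    have ht0 := hTb 0
    have ht1 := hTb 1
    have hlow : μ 1 ≤ ‖T x‖ ^ 2 := by
      nlinarith [mul_nonneg (sub_nonneg.2 h) (sq_nonneg (⟪b 0, x⟫ : ℝ))]
    have hhigh : ‖T x‖ ^ 2 ≤ μ 0 := by
      nlinarith [mul_nonneg (sub_nonneg.2 h) (sq_nonneg (⟪b 1, x⟫ : ℝ))]
    constructor
    · nlinarith [norm_nonneg (T x), norm_nonneg (T (b 1))]
    · nlinarith [norm_nonneg (T x), norm_nonneg (T (b 0))]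
end
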